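/- Let S_n denote the total number of dominating sets of the cycle C_n (of all cardinalities). Then S_1 = 1, S_2 = 3, S_3 = 7, and for every n ≥ 4, S_n = S_{n−1} + S_{n−2} + S_{n−3}. -/

import Mathlib

/-- The cycle graph `C_n` on vertex set `ZMod n`: two vertices are adjacent
iff they are distinct and differ by `1`. -/
def cycleG (n : ℕ) : SimpleGraph (ZMod n) where
  Adj u v := u ≠ v ∧ (u - v = 1 ∨ v - u = 1)
  symm := ⟨fun u v ⟨h1, h2⟩ => ⟨h1.symm, h2.symm⟩⟩
  loopless := ⟨fun u ⟨h, _⟩ => h rfl⟩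

/-- `S` is a dominating set of `G`: every vertex not in `S` is adjacent to a vertex of `S`. -/
def isDomSet {V : Type*} (G : SimpleGraph V) (S : Finset V) : Prop :=
  ∀ v, v ∉ S → ∃ u ∈ S, G.Adj u v

/-- `d(C_n, i)`: the number of dominating sets of `C_n` of cardinality `i`. -/
noncomputable def domCount (n i : ℕ) : ℕ :=
  Nat.card {S : Finset (ZMod n) // isDomSet (cycleG n) S ∧ S.card = i}

/-- The total number of dominating sets of the cycle `C_n`. -/
noncomputable def totalDomCount (n : ℕ) : ℕ :=
  Nat.card {S : Finset (ZMod n) // isDomSet (cycleG n) S}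

/-
Identify a set `S ⊆ ZMod n` with its indicator `x : ZMod n → Bool`: `S` dominates `C_n` iff
every cyclic window `x i, x (i + 1), x (i + 2)` contains a `true`. Recording the pairs
`(x i, x (i + 1))` turns these words into closed walks of length `n` in a digraph on four states,
so `S_n = tr (T ^ n)` for its adjacency matrix `T`. Since `T ^ 4 = T ^ 3 + T ^ 2 + T`, the traces
satisfy the tribonacci recurrence.
-/

namespace Matrix

variable {σ R : Type*} [Fintype σ] [DecidableEq σ] [CommSemiring R]

/-- `Fin.cons a h` lists the vertices `a, h 0, …, h (m - 1)` of a walk to `b`, and `Fin.snoc h b`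
lists the same walk shifted by one step. -/
theorem pow_succ_apply_eq_sum_walks (A : Matrix σ σ R) (m : ℕ) (a b : σ) :
    (A ^ (m + 1)) a b =
      ∑ h : Fin m → σ, ∏ i,
        A (Fin.cons (α := fun _ => σ) a h i) (Fin.snoc (α := fun _ => σ) h b i) := by
  induction m generalizing a with
  | zero => simp [Fin.snoc]
  | succ m ih =>
    rw [pow_succ', mul_apply, ← (Fin.consEquiv fun _ => σ).sum_comp, Fintype.sum_prod_type]
    refine Fintype.sum_congr _ _ fun c => ?_
    rw [ih, Finset.mul_sum]
    refine Fintype.sum_congr _ _ fun h => ?_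
    conv_rhs => rw [Fin.prod_univ_succ]
    simp only [Fin.consEquiv, Equiv.coe_fn_mk, ← Fin.cons_snoc_eq_snoc_cons, Fin.cons_zero,
      Fin.cons_succ]

theorem trace_pow_eq_sum_closed_walks (A : Matrix σ σ R) (n : ℕ) [NeZero n] :
    trace (A ^ n) = ∑ g : ZMod n → σ, ∏ i, A (g i) (g (i + 1)) := by
  obtain ⟨m, rfl⟩ := Nat.exists_eq_succ_of_ne_zero (NeZero.ne n)
  -- `ZMod (m + 1)` is `Fin (m + 1)` by definition
  change ∑ a, (A ^ (m + 1)) a a = ∑ g : Fin (m + 1) → σ, ∏ i, A (g i) (g (i + 1))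
  rw [← (Fin.consEquiv fun _ => σ).sum_comp, Fintype.sum_prod_type]
  simp only [pow_succ_apply_eq_sum_walks, Fin.snoc_eq_cons_rotate, finRotate_apply]
  rfl

end Matrix

def relMatrix {σ : Type*} (r : σ → σ → Prop) [DecidableRel r] : Matrix σ σ ℕ :=
  Matrix.of fun s t => if r s t then 1 else 0

theorem card_closed_walks_eq_trace_relMatrix_pow {σ : Type*} [Fintype σ] [DecidableEq σ]
    (r : σ → σ → Prop) [DecidableRel r] (n : ℕ) [NeZero n] :
    Fintype.card {g : ZMod n → σ // ∀ i, r (g i) (g (i + 1))} =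
      (relMatrix r ^ n).trace := by
  rw [Fintype.card_subtype, Finset.card_filter, Matrix.trace_pow_eq_sum_closed_walks]
  simp only [relMatrix, Matrix.of_apply, Fintype.prod_boole]

def windowStep {α : Type*} (P : α → α → α → Prop) (s t : α × α) : Prop :=
  s.2 = t.1 ∧ P s.1 s.2 t.2

instance {α : Type*} [DecidableEq α] (P : α → α → α → Prop)
    [∀ a b c, Decidable (P a b c)] : DecidableRel (windowStep P) :=
  fun _ _ => inferInstanceAs (Decidable (_ ∧ _))

/-- Words with a width-three window constraint are walks in the de Bruijn graph on pairs of
letters. -/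
def windowEquivWalks {ι α : Type*} (next : ι → ι) (P : α → α → α → Prop) :
    {x : ι → α // ∀ i, P (x i) (x (next i)) (x (next (next i)))} ≃
      {g : ι → α × α // ∀ i, windowStep P (g i) (g (next i))} where
  toFun x := ⟨fun i => (x.1 i, x.1 (next i)), fun i => ⟨rfl, x.2 i⟩⟩
  invFun g := ⟨fun i => (g.1 i).1, fun i => by
    obtain ⟨h₁, hP⟩ := g.2 i
    show P (g.1 i).1 (g.1 (next i)).1 (g.1 (next (next i))).1
    rwa [← h₁, ← (g.2 (next i)).1]⟩
  left_inv _ := rfl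
  right_inv g := Subtype.ext <| funext fun i => Prod.ext rfl (g.2 i).1.symm

theorem isDomSet_cycleG_iff (n : ℕ) (S : Finset (ZMod n)) :
    isDomSet (cycleG n) S ↔ ∀ v : ZMod n, v - 1 ∈ S ∨ v ∈ S ∨ v + 1 ∈ S := by
  refine forall_congr' fun v => ⟨fun h => ?_, ?_⟩
  · by_cases hv : v ∈ S
    · exact Or.inr (Or.inl hv)
    obtain ⟨u, hu, -, huv | huv⟩ := h hv
    · rw [sub_eq_iff_eq_add'] at huv
      exact Or.inr (Or.inr (huv ▸ hu))
    · rw [sub_eq_iff_eq_add', ← sub_eq_iff_eq_add] at huv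
      exact Or.inl (huv ▸ hu)
  · rintro (h | h | h) hv
    · exact ⟨v - 1, h, fun e => hv (e ▸ h), Or.inr (by ring)⟩
    · exact absurd h hv
    · exact ⟨v + 1, h, fun e => hv (e ▸ h), Or.inl (by ring)⟩

def Finset.equivFunBool (α : Type*) [Fintype α] [DecidableEq α] :
    Finset α ≃ (α → Bool) where
  toFun S v := decide (v ∈ S)
  invFun x := {v | x v}
  left_inv S := by ext; simp
  right_inv x := by ext; simp

theorem totalDomCount_eq_card_windows (n : ℕ) [NeZero n] :
    totalDomCount n =
      Nat.card {x : ZMod n → Bool // ∀ i, (x i || x (i + 1) || x (i + 1 + 1)) = true} := by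
  refine Nat.card_congr <| (Finset.equivFunBool _).subtypeEquiv fun S => ?_
  rw [isDomSet_cycleG_iff, ← (Equiv.addRight 1).forall_congr_right]
  simp [Finset.equivFunBool, or_assoc]

def domTransfer : Matrix (Bool × Bool) (Bool × Bool) ℕ :=
  relMatrix (windowStep fun a b c => (a || b || c) = true)

theorem totalDomCount_eq_trace {n : ℕ} (hn : n ≠ 0) :
    totalDomCount n = (domTransfer ^ n).trace := by
  have : NeZero n := ⟨hn⟩
  rw [totalDomCount_eq_card_windows,
    Nat.card_congr (windowEquivWalks (· + 1) fun a b c => (a || b || c) = true),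
    Nat.card_eq_fintype_card, domTransfer, card_closed_walks_eq_trace_relMatrix_pow]

-- The characteristic polynomial of `domTransfer` is `X ^ 4 - X ^ 3 - X ^ 2 - X`.
theorem domTransfer_pow_four :
    domTransfer ^ 4 = domTransfer ^ 3 + domTransfer ^ 2 + domTransfer := by
  simp only [pow_succ, pow_zero, one_mul]
  decide

theorem totalDomCount_tribonacci :
    totalDomCount 1 = 1 ∧ totalDomCount 2 = 3 ∧ totalDomCount 3 = 7 ∧
      ∀ n : ℕ, 4 ≤ n →
        totalDomCount n = totalDomCount (n - 1) + totalDomCount (n - 2)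
          + totalDomCount (n - 3) := by
  refine ⟨?_, ?_, ?_, fun n hn => ?_⟩
  iterate 3
    rw [totalDomCount_eq_trace (by norm_num)]
    simp only [pow_succ, pow_zero, one_mul]
    decide
  obtain ⟨k, rfl⟩ := Nat.exists_eq_add_of_le' hn
  rw [show k + 4 - 1 = k + 3 by omega, show k + 4 - 2 = k + 2 by omega,
    show k + 4 - 3 = k + 1 by omega, totalDomCount_eq_trace (by omega),
    totalDomCount_eq_trace (by omega), totalDomCount_eq_trace (by omega),
    totalDomCount_eq_trace (by omega), pow_add, domTransfer_pow_four]
  simp only [mul_add, ← pow_add, ← pow_succ, Matrix.trace_add]
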